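/- Let S be a regular tetrahedron uvwz in ℍ³ with edge length 2x, m the midpoint of edge uv, n the midpoint of edge wz, and H the plane through uv orthogonal to the segment mn. Then width_H(S) = arcsinh( sinh( arccosh( cosh(2x)/cosh²x ) ) · cosh x ). -/

import Mathlib

/-!
In the hyperboloid model the distance from `p` to the hyperplane with unit normal `ν` is
`arsinh |⟨ν, p⟩|`, and the slabs `|⟨ν, ·⟩| ≤ T` are geodesically convex, so the width of a
convex hull determined by `H` is the distance from `H` of its farthest vertex. Here `u, v ∈ H`,
and the distances of `w` and `z` from `H` are read off the Lambert quadrilaterals `n m h z`,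
`n m h' w`: `sinh |zh| = sinh |mn| · cosh |nz|`. The midpoints are `m = (u + v) / (2 cosh x)` and
`n = (w + z) / (2 cosh x)`, which gives `cosh |mn| = cosh 2x / cosh² x` and the right angle
at `n`.
-/

noncomputable section

namespace HypSpace

/-- Inverse hyperbolic cosine. -/
def arcosh (x : ℝ) : ℝ := Real.log (x + Real.sqrt (x ^ 2 - 1))

/-- The Minkowski bilinear form on `ℝ^{d+1}` (signature `(d,1)`, the last
coordinate being timelike). -/
def mink (d : ℕ) (x y : EuclideanSpace ℝ (Fin (d + 1))) : ℝ :=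
  (∑ i : Fin d, x i.castSucc * y i.castSucc) - x (Fin.last d) * y (Fin.last d)

/-- The hyperboloid model of `d`-dimensional hyperbolic space: the upper sheet
of the two-sheeted hyperboloid `mink x x = -1`. -/
def Pt (d : ℕ) : Type := {x : EuclideanSpace ℝ (Fin (d + 1)) // mink d x x = -1 ∧ 0 < x (Fin.last d)}

variable {d : ℕ}

/-- Hyperbolic distance between two points of `ℍ^d`. -/
def hdist (p q : Pt d) : ℝ := arcosh (-(mink d p.1 q.1))

/-- The geodesic segment between `a` and `b`, described metrically via betweenness
(hyperbolic space is uniquely geodesic). -/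
def seg (a b : Pt d) : Set (Pt d) := {p | hdist a p + hdist p b = hdist a b}

/-- A set is (geodesically) convex if it contains the segment between any two of its points. -/
def IsConvexSet (C : Set (Pt d)) : Prop := ∀ a ∈ C, ∀ b ∈ C, seg a b ⊆ C

/-- The convex hull: the smallest convex set containing `A`. -/
def chull (A : Set (Pt d)) : Set (Pt d) := ⋂₀ {C | IsConvexSet C ∧ A ⊆ C}

/-- The totally geodesic hyperplane with (spacelike) normal vector `v`. -/
def plane (v : EuclideanSpace ℝ (Fin (d + 1))) : Set (Pt d) := {p | mink d v p.1 = 0}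

/-- A hyperplane of `ℍ^d`: the trace on the hyperboloid of a linear hyperplane
with spacelike unit normal. -/
def IsHyperplane (H : Set (Pt d)) : Prop := ∃ v, mink d v v = 1 ∧ H = plane v

/-- Distance from a point to a set. -/
def distPS (p : Pt d) (S : Set (Pt d)) : ℝ := sInf (hdist p '' S)

/-- Distance between two sets. -/
def distSS (A B : Set (Pt d)) : ℝ := sInf {r | ∃ a ∈ A, ∃ b ∈ B, hdist a b = r}

/-- `h` is the orthogonal projection of `g` onto `H`: the point of `H`
realizing the distance from `g` to `H`.  For a hyperplane `H` with `a ∈ H`,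
`IsProj b H a` also expresses that `H` is orthogonal to the segment `ab` at `a`. -/
def IsProj (g : Pt d) (H : Set (Pt d)) (h : Pt d) : Prop :=
  h ∈ H ∧ ∀ k ∈ H, hdist g h ≤ hdist g k

/-- Two hyperplanes are ultraparallel if they are disjoint and not asymptotically
parallel (their distance is positive, i.e. they admit a common perpendicular). -/
def Ultraparallel (H J : Set (Pt d)) : Prop :=
  IsHyperplane H ∧ IsHyperplane J ∧ H ∩ J = ∅ ∧ 0 < distSS H J

/-- `p` is an interior point of `C`. -/
def IsIntr (C : Set (Pt d)) (p : Pt d) : Prop := ∃ ε > 0, ∀ q, hdist p q < ε → q ∈ C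

/-- `p` is a boundary point of the (closed) set `C`. -/
def IsBdry (C : Set (Pt d)) (p : Pt d) : Prop := p ∈ C ∧ ¬ IsIntr C p

/-- `C` is bounded. -/
def IsBddSet (C : Set (Pt d)) : Prop := ∃ R, ∀ a ∈ C, ∀ b ∈ C, hdist a b ≤ R

/-- `C` is closed. -/
def IsClosedSet (C : Set (Pt d)) : Prop :=
  ∀ p : Pt d, (∀ ε > 0, ∃ q ∈ C, hdist p q < ε) → p ∈ C

/-- A convex body: a compact (closed and bounded) convex set with nonempty interior. -/
def IsBody (C : Set (Pt d)) : Prop :=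
  IsConvexSet C ∧ IsBddSet C ∧ IsClosedSet C ∧ ∃ p, IsIntr C p

/-- The hyperplane `H` supports `C`: it meets `C` but misses its interior. -/
def Supports (H C : Set (Pt d)) : Prop :=
  IsHyperplane H ∧ (H ∩ C).Nonempty ∧ ∀ p, IsIntr C p → p ∉ H

/-- The width of `C` determined by `H`, as the maximum distance from `H`
to a point of `C`. -/
def width (H C : Set (Pt d)) : ℝ := sSup ((fun c => distPS c H) '' C)

/-- The width of `C` determined by `H`, as the distance from `H` to a farthest
supporting hyperplane of `C` ultraparallel to `H`. -/
def widthUP (H C : Set (Pt d)) : ℝ :=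
  sSup {r | ∃ J, Supports J C ∧ Ultraparallel H J ∧ distSS H J = r}

/-- The thickness of `C`: the minimum width over supporting hyperplanes. -/
def thickness (C : Set (Pt d)) : ℝ := sInf {r | ∃ H, Supports H C ∧ width H C = r}

/-- The diameter of `C`. -/
def diam (C : Set (Pt d)) : ℝ := sSup {r | ∃ a ∈ C, ∃ b ∈ C, hdist a b = r}

/-- A body of constant width `δ`. -/
def ConstWidth (W : Set (Pt d)) (δ : ℝ) : Prop :=
  IsBody W ∧ ∀ H, Supports H W → width H W = δ

/-- A complete set of diameter `δ`. -/
def CompleteSet (C : Set (Pt d)) (δ : ℝ) : Prop :=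
  diam C = δ ∧ ∀ x, x ∉ C → diam (C ∪ {x}) > δ

/-- A body of constant diameter `δ`. -/
def ConstDiam (C : Set (Pt d)) (δ : ℝ) : Prop :=
  diam C = δ ∧ ∀ p, IsBdry C p → ∃ p' ∈ C, hdist p p' = δ

section Minkowski

variable (x y z : EuclideanSpace ℝ (Fin (d + 1)))

lemma mink_comm : mink d x y = mink d y x := by
  simp [mink, mul_comm]

lemma mink_add_left : mink d (x + y) z = mink d x z + mink d y z := by
  simp [mink, add_mul, Finset.sum_add_distrib]; ring

lemma mink_sub_left : mink d (x - y) z = mink d x z - mink d y z := by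
  simp [mink, sub_mul, Finset.sum_sub_distrib]; ring

lemma mink_smul_left (c : ℝ) : mink d (c • x) y = c * mink d x y := by
  simp [mink, mul_assoc, ← Finset.mul_sum]; ring

lemma mink_add_right : mink d x (y + z) = mink d x y + mink d x z := by
  rw [mink_comm, mink_add_left, mink_comm y, mink_comm z]

lemma mink_sub_right : mink d x (y - z) = mink d x y - mink d x z := by
  rw [mink_comm, mink_sub_left, mink_comm y, mink_comm z]

lemma mink_smul_right (c : ℝ) : mink d x (c • y) = c * mink d x y := by
  rw [mink_comm, mink_smul_left, mink_comm y]

def spaceDot : ℝ := ∑ i : Fin d, x i.castSucc * y i.castSucc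

lemma mink_eq_spaceDot_sub : mink d x y = spaceDot x y - x (Fin.last d) * y (Fin.last d) := rfl

lemma spaceDot_self_nonneg : 0 ≤ spaceDot x x :=
  Finset.sum_nonneg fun _ _ => mul_self_nonneg _

lemma spaceDot_sq_le : spaceDot x y ^ 2 ≤ spaceDot x x * spaceDot y y := by
  simpa [spaceDot, sq] using Finset.sum_mul_sq_le_sq_mul_sq Finset.univ
    (fun i : Fin d => x i.castSucc) (fun i : Fin d => y i.castSucc)

variable {x y}

lemma eq_zero_of_mink_eq_zero_of_timelike (hx : mink d x x < 0) (hxy : mink d x y = 0)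
    (hy : mink d y y = 0) : y = 0 := by
  rw [mink_eq_spaceDot_sub] at hx hxy hy
  have hcs := spaceDot_sq_le x y
  have hyy : spaceDot y y = y (Fin.last d) ^ 2 := by linarith
  have hyL : y (Fin.last d) = 0 := by
    have hgap : 0 < x (Fin.last d) ^ 2 - spaceDot x x := by nlinarith
    have : (x (Fin.last d) ^ 2 - spaceDot x x) * y (Fin.last d) ^ 2 ≤ 0 := by
      have hxy' : spaceDot x y = x (Fin.last d) * y (Fin.last d) := by linarith
      rw [hxy', hyy] at hcs
      linear_combination hcs
    exact pow_eq_zero_iff two_ne_zero |>.mp <|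
      le_antisymm (nonpos_of_mul_nonpos_right this hgap) (sq_nonneg _)
  have hspace : ∀ i : Fin d, y i.castSucc = 0 := by
    have hsum : ∑ i : Fin d, y i.castSucc * y i.castSucc = 0 := by
      rw [← spaceDot, hyy, hyL]; ring
    intro i
    exact mul_self_eq_zero.mp <| (Finset.sum_eq_zero_iff_of_nonneg fun j _ =>
      mul_self_nonneg (y j.castSucc)).mp hsum i (Finset.mem_univ i)
  ext i
  rcases Fin.eq_castSucc_or_eq_last i with ⟨j, rfl⟩ | rfl
  exacts [hspace j, hyL]

lemma last_pos_of_mink_neg (hx : mink d x x < 0) (hy : mink d y y < 0)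
    (hxL : 0 < x (Fin.last d)) (hxy : mink d x y < 0) : 0 < y (Fin.last d) := by
  rw [mink_eq_spaceDot_sub] at hx hy hxy
  by_contra! hyL
  nlinarith [spaceDot_sq_le x y, spaceDot_self_nonneg x, spaceDot_self_nonneg y,
    mul_nonneg hxL.le (neg_nonneg.mpr hyL)]

end Minkowski

lemma mink_le_neg_one (p q : Pt d) : mink d p.1 q.1 ≤ -1 := by
  obtain ⟨hp, hpL⟩ := p.2
  obtain ⟨hq, hqL⟩ := q.2
  rw [mink_eq_spaceDot_sub] at hp hq ⊢
  have hP := spaceDot_self_nonneg p.1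
  have hQ := spaceDot_self_nonneg q.1
  have hcs := spaceDot_sq_le p.1 q.1
  set S := spaceDot p.1 q.1
  set pL := p.1 (Fin.last d)
  set qL := q.1 (Fin.last d)
  have hS : 2 * S ≤ spaceDot p.1 p.1 + spaceDot q.1 q.1 := by
    nlinarith [sq_nonneg (spaceDot p.1 p.1 - spaceDot q.1 q.1)]
  have hsq : (1 + S) ^ 2 ≤ (pL * qL) ^ 2 := by
    have : (pL * qL) ^ 2 = (1 + spaceDot p.1 p.1) * (1 + spaceDot q.1 q.1) := by
      rw [mul_pow]; congr 1 <;> linarith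
    nlinarith
  nlinarith [mul_pos hpL hqL]

lemma eq_of_mink_eq_neg_one {p q : Pt d} (h : mink d p.1 q.1 = -1) : p = q := by
  have hpe : mink d p.1 (p.1 - q.1) = 0 := by
    rw [mink_sub_right, p.2.1, h]; ring
  have hee : mink d (p.1 - q.1) (p.1 - q.1) = 0 := by
    rw [mink_sub_left, hpe, mink_sub_right, mink_comm q.1 p.1, h, q.2.1]; ring
  have := eq_zero_of_mink_eq_zero_of_timelike (by rw [p.2.1]; norm_num) hpe hee
  exact Subtype.ext (sub_eq_zero.mp this)

lemma cosh_hdist (p q : Pt d) : Real.cosh (hdist p q) = -mink d p.1 q.1 :=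
  Real.cosh_arcosh (by linarith [mink_le_neg_one p q])

lemma mink_eq_neg_cosh_hdist (p q : Pt d) : mink d p.1 q.1 = -Real.cosh (hdist p q) := by
  rw [cosh_hdist, neg_neg]

lemma hdist_nonneg (p q : Pt d) : 0 ≤ hdist p q :=
  Real.arcosh_nonneg (by linarith [mink_le_neg_one p q])

lemma hdist_eq_zero_iff {p q : Pt d} : hdist p q = 0 ↔ p = q := by
  constructor
  · intro h
    apply eq_of_mink_eq_neg_one
    rw [mink_eq_neg_cosh_hdist, h, Real.cosh_zero]
  · rintro rfl
    simp [hdist, arcosh, p.2.1]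

lemma hdist_comm (p q : Pt d) : hdist p q = hdist q p := by
  rw [hdist, hdist, mink_comm]

lemma cosh_hdist_of_eq_smul_add {p a b : Pt d} {k : ℝ} (hp : p.1 = k • (a.1 + b.1))
    (q : Pt d) : Real.cosh (hdist p q) = k * (Real.cosh (hdist a q) + Real.cosh (hdist b q)) := by
  rw [cosh_hdist, cosh_hdist, cosh_hdist, hp, mink_smul_left, mink_add_left]
  ring

lemma eq_smul_add_smul_of_mink_eq {a b p : EuclideanSpace ℝ (Fin (d + 1))} {α β : ℝ}
    (ha : mink d a a < 0) (hpa : mink d a p = mink d a (α • a + β • b))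
    (hpb : mink d b p = mink d b (α • a + β • b))
    (hpp : mink d p p = mink d p (α • a + β • b)) : p = α • a + β • b := by
  set e := p - (α • a + β • b)
  have hae : mink d a e = 0 := by rw [mink_sub_right, hpa, sub_self]
  have hbe : mink d b e = 0 := by rw [mink_sub_right, hpb, sub_self]
  have hee : mink d e e = 0 := by
    rw [mink_sub_left, mink_sub_right, hpp, sub_self, mink_add_left, mink_smul_left,
      mink_smul_left, hae, hbe]
    ring
  exact sub_eq_zero.mp (eq_zero_of_mink_eq_zero_of_timelike ha hae hee)

lemma eq_of_mem_seg_self {a p : Pt d} (hp : p ∈ seg a a) : p = a := by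
  have hsum : hdist a p + hdist p a = hdist a a := hp
  rw [hdist_eq_zero_iff.mpr rfl] at hsum
  exact (hdist_eq_zero_iff.mp (by linarith [hdist_nonneg a p, hdist_nonneg p a])).symm

/-- The geodesic from `a` to `b` is `t ↦ (sinh (L - t) • a + sinh t • b) / sinh L`,
`L = hdist a b`. -/
lemma eq_smul_add_smul_of_mem_seg {a b p : Pt d} (hp : p ∈ seg a b) (hab : a ≠ b) :
    p.1 = (Real.sinh (hdist p b) / Real.sinh (hdist a b)) • a.1 +
      (Real.sinh (hdist a p) / Real.sinh (hdist a b)) • b.1 := by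
  have hL : hdist a b = hdist a p + hdist p b := hp.symm
  have hsinh : Real.sinh (hdist a b) ≠ 0 := by
    rw [Ne, Real.sinh_eq_zero, hdist_eq_zero_iff]; exact hab
  have hap := mink_eq_neg_cosh_hdist a p
  have hpb := mink_eq_neg_cosh_hdist p b
  have hab' := mink_eq_neg_cosh_hdist a b
  apply eq_smul_add_smul_of_mink_eq (by rw [a.2.1]; norm_num)
  all_goals
    simp only [mink_add_right, mink_smul_right, a.2.1, b.2.1, p.2.1, hap, hpb, hab',
      mink_comm b.1 a.1, mink_comm b.1 p.1, mink_comm p.1 a.1]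
    field_simp
    simp only [hL, Real.sinh_add, Real.cosh_add]
  · linear_combination (-Real.sinh (hdist p b)) * Real.cosh_sq_sub_sinh_sq (hdist a p)
  · linear_combination (-Real.sinh (hdist a p)) * Real.cosh_sq_sub_sinh_sq (hdist p b)
  · ring

lemma sinh_add_sinh_le_sinh_add {s t : ℝ} (hs : 0 ≤ s) (ht : 0 ≤ t) :
    Real.sinh s + Real.sinh t ≤ Real.sinh (s + t) := by
  rw [Real.sinh_add]
  nlinarith [Real.one_le_cosh s, Real.one_le_cosh t, Real.sinh_nonneg_iff.mpr hs,
    Real.sinh_nonneg_iff.mpr ht]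

lemma isConvexSet_abs_mink_le (ν : EuclideanSpace ℝ (Fin (d + 1))) (T : ℝ) :
    IsConvexSet {p : Pt d | |mink d ν p.1| ≤ T} := by
  intro a ha b hb p hp
  by_cases hab : a = b
  · subst hab
    rwa [eq_of_mem_seg_self hp]
  have ha : |mink d ν a.1| ≤ T := ha
  have hb : |mink d ν b.1| ≤ T := hb
  have hsinh : 0 < Real.sinh (hdist a b) := Real.sinh_pos_iff.mpr <|
    (hdist_nonneg a b).lt_of_ne (Ne.symm (mt hdist_eq_zero_iff.mp hab))
  have hsinh_pb := Real.sinh_nonneg_iff.mpr (hdist_nonneg p b)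
  have hsinh_ap := Real.sinh_nonneg_iff.mpr (hdist_nonneg a p)
  have hsum : Real.sinh (hdist p b) + Real.sinh (hdist a p) ≤ Real.sinh (hdist a b) := by
    rw [← (hp : hdist a p + hdist p b = hdist a b), add_comm (Real.sinh _)]
    exact sinh_add_sinh_le_sinh_add (hdist_nonneg a p) (hdist_nonneg p b)
  show |mink d ν p.1| ≤ T
  rw [eq_smul_add_smul_of_mem_seg hp hab, mink_add_right, mink_smul_right, mink_smul_right,
    div_mul_eq_mul_div, div_mul_eq_mul_div, ← add_div, abs_div, abs_of_pos hsinh,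
    div_le_iff₀ hsinh]
  calc |Real.sinh (hdist p b) * mink d ν a.1 + Real.sinh (hdist a p) * mink d ν b.1|
      ≤ Real.sinh (hdist p b) * T + Real.sinh (hdist a p) * T := by
        refine (abs_add_le _ _).trans (add_le_add ?_ ?_) <;> rw [abs_mul, abs_of_nonneg]
        exacts [mul_le_mul_of_nonneg_left ha hsinh_pb, hsinh_pb,
          mul_le_mul_of_nonneg_left hb hsinh_ap, hsinh_ap]
    _ ≤ T * Real.sinh (hdist a b) := by
        have hT : 0 ≤ T := (abs_nonneg _).trans ha
        nlinarith

lemma eq_inv_two_cosh_smul_add_of_mem_seg {a b p : Pt d} {s : ℝ} (hp : p ∈ seg a b)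
    (hap : hdist a p = s) (hab : hdist a b = 2 * s) (hs : 0 < s) :
    p.1 = (2 * Real.cosh s)⁻¹ • (a.1 + b.1) := by
  have hpb : hdist p b = s := by
    have : hdist a p + hdist p b = hdist a b := hp
    linarith
  have hne : a ≠ b := by
    rintro rfl
    rw [hdist_eq_zero_iff.mpr rfl] at hab
    linarith
  have hcoef : Real.sinh s / Real.sinh (2 * s) = (2 * Real.cosh s)⁻¹ := by
    have := (Real.sinh_pos_iff.mpr hs).ne'
    rw [Real.sinh_two_mul]
    field_simp
  rw [eq_smul_add_smul_of_mem_seg hp hne, hap, hpb, hab, hcoef, smul_add]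

lemma subset_chull (A : Set (Pt d)) : A ⊆ chull A :=
  fun _ ha => Set.mem_sInter.mpr fun _ hC => hC.2 ha

lemma chull_subset {A C : Set (Pt d)} (hC : IsConvexSet C) (hAC : A ⊆ C) : chull A ⊆ C :=
  Set.sInter_subset_of_mem ⟨hC, hAC⟩

section Plane

variable {ν : EuclideanSpace ℝ (Fin (d + 1))}

lemma exists_foot (hν : mink d ν ν = 1) (p : Pt d) : ∃ q ∈ plane ν,
    p.1 = mink d ν p.1 • ν + Real.cosh (Real.arsinh |mink d ν p.1|) • q.1 := by
  set t := mink d ν p.1 with ht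
  set r := Real.cosh (Real.arsinh |t|) with hr_def
  have hr : r ^ 2 = 1 + t ^ 2 := by
    rw [hr_def, Real.cosh_arsinh, Real.sq_sqrt (by positivity), sq_abs]
  have hr0 : 0 < r := Real.cosh_pos _
  set q := r⁻¹ • (p.1 - t • ν)
  have hpν : mink d p.1 ν = t := mink_comm _ _
  have hqq : mink d q q = -1 := by
    simp only [q, mink_smul_left, mink_smul_right, mink_sub_left, mink_sub_right, p.2.1, hν,
      hpν, ← ht]
    field_simp
    linear_combination hr
  have hpq : mink d p.1 q = -r := by
    simp only [q, mink_smul_right, mink_sub_right, p.2.1, hpν]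
    field_simp
    linear_combination hr
  refine ⟨⟨q, hqq, last_pos_of_mink_neg (by rw [p.2.1]; norm_num) (by rw [hqq]; norm_num) p.2.2
    (by rw [hpq]; linarith)⟩, ?_, ?_⟩
  · show mink d ν q = 0
    simp only [q, mink_smul_right, mink_sub_right, hν, ← ht]
    ring
  · show p.1 = t • ν + r • q
    rw [smul_smul, mul_inv_cancel₀ hr0.ne', one_smul, add_sub_cancel]

/-- The hyperbolic Pythagorean theorem for the triangle `p q k` with right angle at the foot `q`. -/
lemma cosh_hdist_eq_mul_of_eq_add_smul {p q k : Pt d} {t r : ℝ} (hp : p.1 = t • ν + r • q.1)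
    (hk : k ∈ plane ν) : Real.cosh (hdist p k) = r * Real.cosh (hdist q k) := by
  have hk : mink d ν k.1 = 0 := hk
  rw [cosh_hdist, cosh_hdist, hp, mink_add_left, mink_smul_left, mink_smul_left, hk]
  ring

lemma arsinh_le_hdist_of_mem_plane (hν : mink d ν ν = 1) (p : Pt d) {k : Pt d}
    (hk : k ∈ plane ν) : Real.arsinh |mink d ν p.1| ≤ hdist p k := by
  obtain ⟨q, -, hpq⟩ := exists_foot hν p
  have hcosh := cosh_hdist_eq_mul_of_eq_add_smul hpq hk
  rw [← abs_of_nonneg (hdist_nonneg p k),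
    ← abs_of_nonneg (Real.arsinh_nonneg_iff.mpr (abs_nonneg (mink d ν p.1))),
    ← Real.cosh_le_cosh, hcosh]
  exact le_mul_of_one_le_right (Real.cosh_pos _).le (Real.one_le_cosh _)

lemma hdist_eq_arsinh_of_eq_add_smul {p q : Pt d}
    (hp : p.1 = mink d ν p.1 • ν + Real.cosh (Real.arsinh |mink d ν p.1|) • q.1)
    (hqν : q ∈ plane ν) : hdist p q = Real.arsinh |mink d ν p.1| := by
  have hcosh := cosh_hdist_eq_mul_of_eq_add_smul hp hqν
  rw [hdist_eq_zero_iff.mpr rfl, Real.cosh_zero, mul_one] at hcosh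
  rw [hdist, ← cosh_hdist, hcosh]
  exact Real.arcosh_cosh (Real.arsinh_nonneg_iff.mpr (abs_nonneg _))

lemma distPS_plane (hν : mink d ν ν = 1) (p : Pt d) :
    distPS p (plane ν) = Real.arsinh |mink d ν p.1| := by
  obtain ⟨q, hqν, hpq⟩ := exists_foot hν p
  refine IsLeast.csInf_eq ⟨⟨q, hqν, hdist_eq_arsinh_of_eq_add_smul hpq hqν⟩, ?_⟩
  rintro _ ⟨k, hk, rfl⟩
  exact arsinh_le_hdist_of_mem_plane hν p hk

lemma IsProj.hdist_eq (hν : mink d ν ν = 1) {p k : Pt d} (h : IsProj p (plane ν) k) :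
    hdist p k = Real.arsinh |mink d ν p.1| := by
  obtain ⟨q, hqν, hpq⟩ := exists_foot hν p
  exact le_antisymm (hdist_eq_arsinh_of_eq_add_smul hpq hqν ▸ h.2 q hqν)
    (arsinh_le_hdist_of_mem_plane hν p h.1)

lemma IsProj.eq_add_smul (hν : mink d ν ν = 1) {p k : Pt d} (h : IsProj p (plane ν) k) :
    p.1 = mink d ν p.1 • ν + Real.cosh (Real.arsinh |mink d ν p.1|) • k.1 := by
  obtain ⟨q, hqν, hpq⟩ := exists_foot hν p
  have hcosh := cosh_hdist_eq_mul_of_eq_add_smul hpq h.1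
  rw [h.hdist_eq hν, cosh_hdist] at hcosh
  have hqk : mink d q.1 k.1 = -1 := by
    have := Real.cosh_pos (Real.arsinh |mink d ν p.1|)
    have : -mink d q.1 k.1 = 1 := by
      apply mul_left_cancel₀ this.ne'
      rw [← hcosh, mul_one]
    linarith
  rwa [← eq_of_mink_eq_neg_one hqk]

/-- Lambert quadrilateral `n m h z` with right angles at `n` (encoded by the Pythagorean relation
for `m n z`), at `m` and at the foot `h` of `z`. -/
lemma sinh_distPS_plane_eq (hν : mink d ν ν = 1) {m n z : Pt d} (hnm : IsProj n (plane ν) m)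
    (hne : m ≠ n)
    (hright : Real.cosh (hdist m z) = Real.cosh (hdist m n) * Real.cosh (hdist n z)) :
    Real.sinh (distPS z (plane ν)) = Real.sinh (hdist m n) * Real.cosh (hdist n z) := by
  set t := mink d ν n.1
  have hmn : hdist m n = Real.arsinh |t| := by rw [hdist_comm, hnm.hdist_eq hν]
  have hn := hnm.eq_add_smul hν
  rw [← hmn] at hn
  have ht : t ≠ 0 := by
    intro ht
    rw [ht, abs_zero, Real.arsinh_zero, hdist_eq_zero_iff] at hmn
    exact hne hmn
  have hz : t * mink d ν z.1 = t * (t * Real.cosh (hdist n z)) := by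
    have : mink d (t • ν) z.1 = mink d (n.1 - Real.cosh (hdist m n) • m.1) z.1 := by
      rw [hn, add_sub_cancel_right]
    rw [mink_smul_left, mink_sub_left, mink_smul_left, mink_eq_neg_cosh_hdist,
      mink_eq_neg_cosh_hdist, hright] at this
    rw [this]
    have : t ^ 2 = Real.cosh (hdist m n) ^ 2 - 1 := by
      rw [hmn, Real.cosh_arsinh, Real.sq_sqrt (by positivity), sq_abs]; ring
    linear_combination (-Real.cosh (hdist n z)) * this
  rw [distPS_plane hν, Real.sinh_arsinh, mul_left_cancel₀ ht hz, hmn, Real.sinh_arsinh, abs_mul,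
    abs_of_pos (Real.cosh_pos _)]

lemma distPS_plane_le_of_mem (hν : mink d ν ν = 1) {a : Pt d} (ha : a ∈ plane ν) (p : Pt d) :
    distPS a (plane ν) ≤ distPS p (plane ν) := by
  rw [distPS_plane hν, distPS_plane hν, show mink d ν a.1 = 0 from ha, abs_zero]
  exact Real.arsinh_le_arsinh.mpr (abs_nonneg _)

lemma width_plane_chull_eq (hν : mink d ν ν = 1) {A : Set (Pt d)} {z : Pt d} (hz : z ∈ A)
    (hA : ∀ a ∈ A, distPS a (plane ν) ≤ distPS z (plane ν)) :
    width (plane ν) (chull A) = distPS z (plane ν) := by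
  have hslab : chull A ⊆ {p : Pt d | |mink d ν p.1| ≤ |mink d ν z.1|} := by
    refine chull_subset (isConvexSet_abs_mink_le ν _) fun a ha => ?_
    have := hA a ha
    rwa [distPS_plane hν, distPS_plane hν, Real.arsinh_le_arsinh] at this
  refine IsGreatest.csSup_eq ⟨⟨z, subset_chull A hz, rfl⟩, ?_⟩
  rintro _ ⟨p, hp, rfl⟩
  simp only [distPS_plane hν]
  exact Real.arsinh_le_arsinh.mpr (hslab hp)

end Plane

/-- Example 4: the width of the regular tetrahedron of edge `2x`
determined by the plane through an edge orthogonal to the common perpendicular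
of opposite edges. -/
theorem width_of_regular_tetrahedron_edge (x : ℝ) (hx : 0 < x) (u v w z : Pt 3)
    (huv : hdist u v = 2 * x) (huw : hdist u w = 2 * x) (huz : hdist u z = 2 * x)
    (hvw : hdist v w = 2 * x) (hvz : hdist v z = 2 * x) (hwz : hdist w z = 2 * x)
    (m n : Pt 3) (hm : m ∈ seg u v) (hum : hdist u m = x)
    (hn : n ∈ seg w z) (hwn : hdist w n = x)
    (H : Set (Pt 3)) (hH : IsHyperplane H) (huH : u ∈ H) (hvH : v ∈ H)
    (hperp : IsProj n H m) :
    width H (chull {u, v, w, z}) =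
      Real.arsinh (Real.sinh (arcosh (Real.cosh (2 * x) / (Real.cosh x) ^ 2)) * Real.cosh x) := by
  obtain ⟨ν, hν, rfl⟩ := hH
  have hm' := eq_inv_two_cosh_smul_add_of_mem_seg hm hum huv hx
  have hn' := eq_inv_two_cosh_smul_add_of_mem_seg hn hwn hwz hx
  have hnz : hdist n z = x := by linarith [show hdist w n + hdist n z = hdist w z from hn]
  have hnw : hdist n w = x := by rw [hdist_comm, hwn]
  have hmn : Real.cosh (hdist m n) = Real.cosh (2 * x) / Real.cosh x ^ 2 := by
    rw [cosh_hdist_of_eq_smul_add hm' n, hdist_comm u, hdist_comm v,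
      cosh_hdist_of_eq_smul_add hn' u, cosh_hdist_of_eq_smul_add hn' v, hdist_comm w u,
      hdist_comm z u, hdist_comm w v, hdist_comm z v, huw, huz, hvw, hvz]
    field_simp
    ring
  have hne : m ≠ n := by
    rintro rfl
    rw [hdist_eq_zero_iff.mpr rfl, Real.cosh_zero, Real.cosh_two_mul, Real.cosh_sq] at hmn
    field_simp at hmn
    nlinarith [Real.sinh_pos_iff.mpr hx]
  have hright {y : Pt 3} (hny : hdist n y = x) (huy : hdist u y = 2 * x)
      (hvy : hdist v y = 2 * x) :
      Real.cosh (hdist m y) = Real.cosh (hdist m n) * Real.cosh (hdist n y) := by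
    rw [cosh_hdist_of_eq_smul_add hm' y, huy, hvy, hmn, hny]
    field_simp
    ring
  have hz := sinh_distPS_plane_eq hν hperp hne (hright hnz huz hvz)
  have hw := sinh_distPS_plane_eq hν hperp hne (hright hnw huw hvw)
  have hdist_mn : hdist m n = arcosh (Real.cosh (2 * x) / Real.cosh x ^ 2) := by
    rw [← hmn]; exact (Real.arcosh_cosh (hdist_nonneg m n)).symm
  rw [width_plane_chull_eq hν (z := z) (by simp) ?_, ← Real.arsinh_sinh (distPS z _), hz, hnz,
    hdist_mn]
  rintro a (rfl | rfl | rfl | rfl)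
  · exact distPS_plane_le_of_mem hν huH z
  · exact distPS_plane_le_of_mem hν hvH z
  · rw [Real.sinh_injective (hw.trans (by rw [hnw, hnz]) |>.trans hz.symm)]
  · exact le_rfl

end HypSpace
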